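/- Let d ≥ 1 be an integer and α > 0. If f is the heat kernel of order α on ℝ^d, then for every t > 0, every x ∈ ℝ^d, every integer n ≥ 1, and all 𝐬, 𝐭 ∈ (0,t)^n with pairwise distinct coordinates: ψ^{*(n)}(𝐬,𝐭) ≤ (2πα)^{−nd/2}. If f is the Poisson kernel of order α on ℝ^d, then under the same hypotheses ψ^{*(n)}(𝐬,𝐭) ≤ (C_d α^{−d})^n, where C_d = π^{−(d+1)/2} Γ((d+1)/2). -/

import Mathlib

open MeasureTheory

/-- The heat kernel `p_t(x) = (2πt)^{-d/2} exp(-|x|²/(2t))` on `ℝ^d`. -/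
noncomputable def heatKernel (d : ℕ) (t : ℝ) (x : EuclideanSpace ℝ (Fin d)) : ℝ :=
  (2 * Real.pi * t) ^ (-(d : ℝ) / 2) * Real.exp (-‖x‖ ^ 2 / (2 * t))

/-- The Poisson kernel of order `α`:
`f(x) = C_d α (|x|²+α²)^{-(d+1)/2}`, `C_d = π^{-(d+1)/2} Γ((d+1)/2)`. -/
noncomputable def poissonKernelOrder (d : ℕ) (α : ℝ) (x : EuclideanSpace ℝ (Fin d)) : ℝ :=
  (Real.pi ^ (-((d : ℝ) + 1) / 2) * Real.Gamma (((d : ℝ) + 1) / 2)) * α *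
    (‖x‖ ^ 2 + α ^ 2) ^ (-((d : ℝ) + 1) / 2)

/-- The value `s_{σ(j+1)}` of the increasing rearrangement of `s`, with the convention
`s_{σ(n+1)} = t`; here `σ = Tuple.sort s` is the sorting permutation of `s`. -/
noncomputable def sortedNext (n : ℕ) (t : ℝ) (s : Fin n → ℝ) (j : Fin n) : ℝ :=
  if hj : (j : ℕ) + 1 < n then s (Tuple.sort s ⟨(j : ℕ) + 1, hj⟩) else t

/-- The corresponding value `y_{σ(j+1)}` for a vector `Y` of points of `ℝ^d`, with the
convention `y_{σ(n+1)} = x`. -/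
noncomputable def sortedNextVec {E : Type*} (n : ℕ) (x : E) (s : Fin n → ℝ)
    (Y : Fin n → E) (j : Fin n) : E :=
  if hj : (j : ℕ) + 1 < n then Y (Tuple.sort s ⟨(j : ℕ) + 1, hj⟩) else x

/-- `ψ^{*(n)}(𝐬,𝐭)`, cf. the paper: the double integral over `(ℝ^d)^n × (ℝ^d)^n` of
`∏_j f(x_j-y_j) ∏_j p_{t_{ρ(j+1)}-t_{ρ(j)}}(x_{ρ(j+1)}-x_{ρ(j)})
∏_j p_{s_{σ(j+1)}-s_{σ(j)}}(y_{σ(j+1)}-y_{σ(j)})`. -/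
noncomputable def psiStar (d : ℕ) (f : EuclideanSpace ℝ (Fin d) → ℝ) (n : ℕ) (t : ℝ)
    (x : EuclideanSpace ℝ (Fin d)) (s u : Fin n → ℝ) : ENNReal :=
  ∫⁻ X : Fin n → EuclideanSpace ℝ (Fin d), ∫⁻ Y : Fin n → EuclideanSpace ℝ (Fin d),
    ENNReal.ofReal ((∏ j : Fin n, f (X j - Y j)) *
      (∏ j : Fin n, heatKernel d (sortedNext n t u j - u (Tuple.sort u j))
        (sortedNextVec n x u X j - X (Tuple.sort u j))) *
      (∏ j : Fin n, heatKernel d (sortedNext n t s j - s (Tuple.sort s j))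
        (sortedNextVec n x s Y j - Y (Tuple.sort s j))))

/-! Since `0 ≤ f ≤ M` for a constant `M` (`(2πα)^{-d/2}` for the heat kernel, `C_d α^{-d}` for
the Poisson kernel), the integrand of `ψ^{*(n)}` is at most `M^n` times the product of two
chains of Gaussian transition densities, one in `𝐱` and one in `𝐲`. After sorting the
coordinates, each chain integrates to `1`: integrate out the point at the earliest time, which
occurs in a single factor, and induct. Hence `ψ^{*(n)} ≤ M^n`. -/

open scoped ENNReal

theorem lintegral_pi_fin_succ {α : Type*} [MeasurableSpace α] (μ : Measure α) [SigmaFinite μ]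
    {n : ℕ} {F : (Fin (n + 1) → α) → ℝ≥0∞} (hF : Measurable F) :
    ∫⁻ Y, F Y ∂Measure.pi (fun _ ↦ μ) =
      ∫⁻ W, ∫⁻ z, F (Fin.cons z W) ∂μ ∂Measure.pi (fun _ ↦ μ) := by
  rw [((measurePreserving_piFinSuccAbove (fun _ ↦ μ) 0).symm _).lintegral_map_equiv,
    lintegral_prod_symm' (fun p ↦ F ((MeasurableEquiv.piFinSuccAbove _ 0).symm p))
      (hF.comp (MeasurableEquiv.measurable _))]
  simp [MeasurableEquiv.piFinSuccAbove, Fin.consEquiv]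

theorem lintegral_pi_comp_perm {ι α : Type*} [Fintype ι] [MeasurableSpace α] (μ : Measure α)
    [SigmaFinite μ] (σ : Equiv.Perm ι) (g : (ι → α) → ℝ≥0∞) :
    ∫⁻ Y, g (Y ∘ σ) ∂Measure.pi (fun _ ↦ μ) = ∫⁻ Y, g Y ∂Measure.pi (fun _ ↦ μ) :=
  ((measurePreserving_arrowCongr' (fun _ ↦ μ) (fun _ ↦ μ) σ.symm (MeasurableEquiv.refl α)
    fun _ ↦ MeasurePreserving.id μ).lintegral_map_equiv g).symm

theorem measurable_snoc_apply {α : Type*} [MeasurableSpace α] {n : ℕ} (c : α)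
    (i : Fin (n + 1)) : Measurable fun Y : Fin n → α ↦ (Fin.snoc Y c : Fin (n + 1) → α) i := by
  induction i using Fin.lastCases <;> simp [measurable_pi_apply]

theorem lintegral_prod_snoc_sub_eq_one {G : Type*} [MeasurableSpace G] [AddGroup G]
    [MeasurableAdd₂ G] [MeasurableNeg G] (μ : Measure G) [SigmaFinite μ]
    [μ.IsAddLeftInvariant] [μ.IsNegInvariant] {n : ℕ} (k : Fin n → G → ℝ≥0∞)
    (hk : ∀ j, Measurable (k j)) (hk1 : ∀ j, ∫⁻ x, k j x ∂μ = 1) (c : G) :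
    ∫⁻ Y, ∏ j, k j ((Fin.snoc Y c : Fin (n + 1) → G) j.succ - Y j)
      ∂Measure.pi (fun _ ↦ μ) = 1 := by
  induction n with
  | zero => simp
  | succ n ih =>
    have hmeas : Measurable fun Y : Fin (n + 1) → G ↦
        ∏ j, k j ((Fin.snoc Y c : Fin (n + 2) → G) j.succ - Y j) :=
      Finset.measurable_prod _ fun j _ ↦
        (hk j).comp ((measurable_snoc_apply c _).sub (measurable_pi_apply j))
    rw [lintegral_pi_fin_succ μ hmeas, ← ih (fun j ↦ k j.succ) (fun j ↦ hk _) (fun j ↦ hk1 _)]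
    refine lintegral_congr fun W ↦ ?_
    simp only [Fin.prod_univ_succ, ← Fin.cons_snoc_eq_snoc_cons, Fin.cons_succ, Fin.cons_zero]
    rw [lintegral_mul_const _ (f := fun z ↦ k 0 (_ - z)) ((hk 0).comp (measurable_const_sub _)),
      lintegral_sub_left_eq_self (k 0), hk1, one_mul]

section HeatKernel

variable {d : ℕ} {t : ℝ}

theorem heatKernel_nonneg (ht : 0 ≤ t) (x : EuclideanSpace ℝ (Fin d)) :
    0 ≤ heatKernel d t x := by
  unfold heatKernel
  positivity

theorem heatKernel_le (ht : 0 ≤ t) (x : EuclideanSpace ℝ (Fin d)) :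
    heatKernel d t x ≤ (2 * Real.pi * t) ^ (-(d : ℝ) / 2) := by
  have hexp : Real.exp (-‖x‖ ^ 2 / (2 * t)) ≤ 1 :=
    Real.exp_le_one_iff.2 (div_nonpos_of_nonpos_of_nonneg (by nlinarith) (by positivity))
  simpa [heatKernel] using mul_le_mul_of_nonneg_left hexp
    (Real.rpow_nonneg (by positivity : 0 ≤ 2 * Real.pi * t) (-(d : ℝ) / 2))

@[fun_prop]
theorem measurable_heatKernel (t : ℝ) : Measurable (heatKernel d t) := by
  unfold heatKernel
  fun_prop

theorem integral_heatKernel (ht : 0 < t) : ∫ x, heatKernel d t x = 1 := by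
  have hb : 0 < 1 / (2 * t) := by positivity
  have h2πt : 0 < 2 * Real.pi * t := by positivity
  have hexponent (x : EuclideanSpace ℝ (Fin d)) :
      -‖x‖ ^ 2 / (2 * t) = -(1 / (2 * t)) * ‖x‖ ^ 2 := by
    ring
  simp_rw [heatKernel, hexponent]
  rw [integral_const_mul, GaussianFourier.integral_rexp_neg_mul_sq_norm hb,
    finrank_euclideanSpace_fin, show Real.pi / (1 / (2 * t)) = 2 * Real.pi * t by field_simp,
    ← Real.rpow_add h2πt, neg_div, neg_add_cancel, Real.rpow_zero]

theorem lintegral_heatKernel (ht : 0 < t) :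
    ∫⁻ x, ENNReal.ofReal (heatKernel d t x) = 1 := by
  rw [← ofReal_integral_eq_lintegral_ofReal
      (integrable_of_integral_eq_one (integral_heatKernel ht))
      (.of_forall (heatKernel_nonneg ht.le)),
    integral_heatKernel ht, ENNReal.ofReal_one]

end HeatKernel

section PoissonKernel

variable {d : ℕ} {α : ℝ}

theorem poissonKernelOrder_nonneg (hα : 0 ≤ α) (x : EuclideanSpace ℝ (Fin d)) :
    0 ≤ poissonKernelOrder d α x := by
  unfold poissonKernelOrder
  positivity

theorem poissonKernelOrder_le (hα : 0 < α) (x : EuclideanSpace ℝ (Fin d)) :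
    poissonKernelOrder d α x ≤
      (Real.pi ^ (-((d : ℝ) + 1) / 2) * Real.Gamma (((d : ℝ) + 1) / 2)) * α ^ (-(d : ℝ)) := by
  have hpow : (‖x‖ ^ 2 + α ^ 2) ^ (-((d : ℝ) + 1) / 2) ≤ (α ^ 2) ^ (-((d : ℝ) + 1) / 2) :=
    Real.rpow_le_rpow_of_nonpos (by positivity) (by nlinarith)
      (by linarith [(d.cast_nonneg : (0 : ℝ) ≤ d)])
  have hα_pow : α * (α ^ 2) ^ (-((d : ℝ) + 1) / 2) = α ^ (-(d : ℝ)) := by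
    rw [← Real.rpow_natCast, ← Real.rpow_mul hα.le,
      show ((2 : ℕ) : ℝ) * (-((d : ℝ) + 1) / 2) = -(d : ℝ) - 1 by push_cast; ring,
      Real.rpow_sub_one hα.ne', mul_div_cancel₀ _ hα.ne']
  unfold poissonKernelOrder
  rw [mul_assoc _ α, ← hα_pow]
  gcongr

end PoissonKernel

section SortedTimes

variable {n : ℕ} {t : ℝ} {s : Fin n → ℝ}

theorem sortedNext_sub_pos (hs : ∀ j, s j < t) (hinj : Function.Injective s) (j : Fin n) :
    0 < sortedNext n t s j - s (Tuple.sort s j) := by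
  have hmono : StrictMono (s ∘ Tuple.sort s) :=
    (Tuple.monotone_sort s).strictMono_of_injective (hinj.comp (Equiv.injective _))
  unfold sortedNext
  split_ifs
  · exact sub_pos.2 (hmono (Fin.mk_lt_mk.2 j.val.lt_succ_self))
  · exact sub_pos.2 (hs _)

theorem sortedNextVec_eq_snoc {E : Type*} (x : E) (s : Fin n → ℝ) (Y : Fin n → E) (j : Fin n) :
    sortedNextVec n x s Y j = (Fin.snoc (Y ∘ Tuple.sort s) x : Fin (n + 1) → E) j.succ := by
  simp only [sortedNextVec, Fin.snoc, Fin.val_succ]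
  split_ifs <;> rfl

end SortedTimes

section HeatChain

variable {d n : ℕ} {t : ℝ} {s : Fin n → ℝ}

noncomputable def heatChain (d n : ℕ) (t : ℝ) (x : EuclideanSpace ℝ (Fin d)) (s : Fin n → ℝ)
    (Y : Fin n → EuclideanSpace ℝ (Fin d)) : ℝ :=
  ∏ j, heatKernel d (sortedNext n t s j - s (Tuple.sort s j))
    (sortedNextVec n x s Y j - Y (Tuple.sort s j))

theorem psiStar_eq_lintegral_heatChain (f : EuclideanSpace ℝ (Fin d) → ℝ)
    (x : EuclideanSpace ℝ (Fin d)) (s u : Fin n → ℝ) :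
    psiStar d f n t x s u = ∫⁻ X, ∫⁻ Y, ENNReal.ofReal
      ((∏ j, f (X j - Y j)) * heatChain d n t x u X * heatChain d n t x s Y) :=
  rfl

theorem heatChain_nonneg (hs : ∀ j, s j < t) (hinj : Function.Injective s)
    (x : EuclideanSpace ℝ (Fin d)) (Y : Fin n → EuclideanSpace ℝ (Fin d)) :
    0 ≤ heatChain d n t x s Y :=
  Finset.prod_nonneg fun j _ ↦ heatKernel_nonneg (sortedNext_sub_pos hs hinj j).le _

theorem lintegral_heatChain (hs : ∀ j, s j < t) (hinj : Function.Injective s)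
    (x : EuclideanSpace ℝ (Fin d)) :
    ∫⁻ Y, ENNReal.ofReal (heatChain d n t x s Y) = 1 := by
  set τ := fun j ↦ sortedNext n t s j - s (Tuple.sort s j)
  set k := fun j (z : EuclideanSpace ℝ (Fin d)) ↦ ENNReal.ofReal (heatKernel d (τ j) z)
  set g := fun Z : Fin n → EuclideanSpace ℝ (Fin d) ↦
    ∏ j, k j ((Fin.snoc Z x : Fin (n + 1) → _) j.succ - Z j)
  calc ∫⁻ Y, ENNReal.ofReal (heatChain d n t x s Y)
      = ∫⁻ Y, g (Y ∘ Tuple.sort s) ∂Measure.pi fun _ ↦ volume := by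
        rw [← volume_pi]
        refine lintegral_congr fun Y ↦ ?_
        rw [heatChain, ENNReal.ofReal_prod_of_nonneg fun j _ ↦
          heatKernel_nonneg (sortedNext_sub_pos hs hinj j).le _]
        simp only [sortedNextVec_eq_snoc, Function.comp_apply, g, k, τ]
    _ = ∫⁻ Y, g Y ∂Measure.pi fun _ ↦ volume := lintegral_pi_comp_perm _ _ g
    _ = 1 := lintegral_prod_snoc_sub_eq_one volume k (fun j ↦ by fun_prop)
          (fun j ↦ lintegral_heatKernel (sortedNext_sub_pos hs hinj j)) x

theorem psiStar_le_pow {f : EuclideanSpace ℝ (Fin d) → ℝ} {M : ℝ} (hf0 : ∀ z, 0 ≤ f z)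
    (hfM : ∀ z, f z ≤ M) (x : EuclideanSpace ℝ (Fin d)) {u : Fin n → ℝ}
    (hs : ∀ j, s j < t) (hu : ∀ j, u j < t)
    (hsinj : Function.Injective s) (huinj : Function.Injective u) :
    psiStar d f n t x s u ≤ ENNReal.ofReal (M ^ n) := by
  have hprod (X Y : Fin n → EuclideanSpace ℝ (Fin d)) : ∏ j, f (X j - Y j) ≤ M ^ n := by
    simpa using Finset.prod_le_prod (s := .univ) (fun j _ ↦ hf0 (X j - Y j)) fun j _ ↦ hfM _
  have hM : 0 ≤ M := (hf0 0).trans (hfM 0)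
  calc psiStar d f n t x s u
      ≤ ∫⁻ X, ∫⁻ Y, ENNReal.ofReal (M ^ n) * ENNReal.ofReal (heatChain d n t x u X) *
          ENNReal.ofReal (heatChain d n t x s Y) := by
        rw [psiStar_eq_lintegral_heatChain]
        gcongr with X Y
        have := heatChain_nonneg hu huinj x X
        have := heatChain_nonneg hs hsinj x Y
        rw [← ENNReal.ofReal_mul (by positivity), ← ENNReal.ofReal_mul (by positivity)]
        gcongr
        exact hprod X Y
    _ = ENNReal.ofReal (M ^ n) := by
        simp_rw [lintegral_const_mul' _ _ (ENNReal.mul_ne_top ENNReal.ofReal_ne_top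
          ENNReal.ofReal_ne_top), lintegral_heatChain hs hsinj, mul_one,
          lintegral_const_mul' _ _ ENNReal.ofReal_ne_top, lintegral_heatChain hu huinj, mul_one]

end HeatChain

theorem heat_poisson_psiStar_bound_general (d : ℕ) (α : ℝ) (hα : 0 < α)
    (t : ℝ) (x : EuclideanSpace ℝ (Fin d)) (n : ℕ)
    (s u : Fin n → ℝ) (hs : ∀ j, s j ∈ Set.Ioo 0 t) (hu : ∀ j, u j ∈ Set.Ioo 0 t)
    (hsinj : Function.Injective s) (huinj : Function.Injective u) :
    psiStar d (heatKernel d α) n t x s u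
        ≤ ENNReal.ofReal ((2 * Real.pi * α) ^ (-((n : ℝ) * d) / 2)) ∧
    psiStar d (poissonKernelOrder d α) n t x s u
        ≤ ENNReal.ofReal (((Real.pi ^ (-((d : ℝ) + 1) / 2) * Real.Gamma (((d : ℝ) + 1) / 2))
            * α ^ (-(d : ℝ))) ^ n) := by
  have hs_lt (j : Fin n) : s j < t := (hs j).2
  have hu_lt (j : Fin n) : u j < t := (hu j).2
  refine ⟨?_, psiStar_le_pow (poissonKernelOrder_nonneg hα.le) (poissonKernelOrder_le hα) x
    hs_lt hu_lt hsinj huinj⟩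
  calc psiStar d (heatKernel d α) n t x s u
      ≤ ENNReal.ofReal (((2 * Real.pi * α) ^ (-(d : ℝ) / 2)) ^ n) :=
        psiStar_le_pow (heatKernel_nonneg hα.le) (heatKernel_le hα.le) x hs_lt hu_lt hsinj huinj
    _ = ENNReal.ofReal ((2 * Real.pi * α) ^ (-((n : ℝ) * d) / 2)) := by
        rw [← Real.rpow_natCast, ← Real.rpow_mul (by positivity)]
        ring_nf

/-- If `f` is the heat kernel of order `α` then `ψ^{*(n)}(𝐬,𝐭) ≤ (2πα)^{-nd/2}`; if `f` is
the Poisson kernel of order `α` then `ψ^{*(n)}(𝐬,𝐭) ≤ (C_d α^{-d})^n`, for all `t > 0`,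
`x ∈ ℝ^d`, `n ≥ 1` and `𝐬, 𝐭 ∈ (0,t)^n` with pairwise distinct coordinates. -/
theorem heat_poisson_psiStar_bound (d : ℕ) (hd : 1 ≤ d) (α : ℝ) (hα : 0 < α)
    (t : ℝ) (ht : 0 < t) (x : EuclideanSpace ℝ (Fin d)) (n : ℕ) (hn : 1 ≤ n)
    (s u : Fin n → ℝ) (hs : ∀ j, s j ∈ Set.Ioo 0 t) (hu : ∀ j, u j ∈ Set.Ioo 0 t)
    (hsinj : Function.Injective s) (huinj : Function.Injective u) :
    psiStar d (heatKernel d α) n t x s u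
        ≤ ENNReal.ofReal ((2 * Real.pi * α) ^ (-((n : ℝ) * d) / 2)) ∧
    psiStar d (poissonKernelOrder d α) n t x s u
        ≤ ENNReal.ofReal (((Real.pi ^ (-((d : ℝ) + 1) / 2) * Real.Gamma (((d : ℝ) + 1) / 2))
            * α ^ (-(d : ℝ))) ^ n) :=
  heat_poisson_psiStar_bound_general d α hα t x n s u hs hu hsinj huinj
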